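/- R(C₄, K_{1,102}) ≤ 113, R(C₄, K_{1,104}) ≤ 115, R(C₄, K_{1,106}) ≤ 117, and R(C₄, K_{1,108}) ≤ 119; that is, for each n ∈ {102, 104, 106, 108}, R(C₄, K_{1,n}) ≤ n + 11. -/

import Mathlib

/-- `G` contains a subgraph isomorphic to `H`, i.e. there is an injective map of the
vertices of `H` into the vertices of `G` preserving adjacency. -/
def SimpleGraph.ContainsCopy {V W : Type*} (G : SimpleGraph V) (H : SimpleGraph W) : Prop :=
  ∃ f : W ↪ V, ∀ ⦃a b : W⦄, H.Adj a b → G.Adj (f a) (f b)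

/-- The Ramsey number `R(H₁, H₂)`: the least `N` such that every simple graph `G` on `N`
vertices contains a subgraph isomorphic to `H₁`, or its complement contains a subgraph
isomorphic to `H₂`. -/
noncomputable def ramseyNumber {V W : Type*} (H₁ : SimpleGraph V) (H₂ : SimpleGraph W) : ℕ :=
  sInf {N : ℕ | ∀ G : SimpleGraph (Fin N),
    G.ContainsCopy H₁ ∨ Gᶜ.ContainsCopy H₂}

/-- The star `K_{1,n}` on `n + 1` vertices. -/
def starGraph (n : ℕ) : SimpleGraph (Fin 1 ⊕ Fin n) := completeBipartiteGraph (Fin 1) (Fin n)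

/-! Let `G` have `n + k + 1` vertices (odd, `k` even) and no `C₄`. The neighbourhoods of the
neighbours of a vertex `v` meet only in `v`, so if all degrees exceed `k` then
`deg v * k ≤ n + k < k * (k + 2)`, making `G` `(k + 1)`-regular on an odd number of vertices,
which the handshake lemma forbids. Hence some vertex has degree at most `k` in `G`, i.e. at least
`n` in `Gᶜ`, and is the centre of a star `K_{1,n}` there. For `n ≤ 108` even, `k = 10` works. -/

open Finset

namespace SimpleGraph

variable {V : Type*} (G : SimpleGraph V)

theorem containsCopy_iff_isContained {W : Type*} {H : SimpleGraph W} :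
    G.ContainsCopy H ↔ H ⊑ G :=
  ⟨fun ⟨f, hf⟩ ↦ ⟨⟨⟨f, fun h ↦ hf h⟩, f.injective⟩⟩,
    fun ⟨c⟩ ↦ ⟨⟨c, c.injective⟩, fun _ _ h ↦ c.toHom.map_adj h⟩⟩

theorem containsCopy_cycleGraph_four {a b c d : V} (hab : G.Adj a b) (hbc : G.Adj b c)
    (hcd : G.Adj c d) (hda : G.Adj d a) (hac : a ≠ c) (hbd : b ≠ d) :
    G.ContainsCopy (cycleGraph 4) := by
  rw [containsCopy_iff_isContained, cycleGraph_isContained_iff (by norm_num)]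
  refine ⟨a, .cons hab (.cons hbc (.cons hcd (.cons hda .nil))), ?_, rfl⟩
  simp [Walk.cons_isCycle_iff, Walk.cons_isPath_iff, hab.ne, hbc.ne, hcd.ne, hda.ne, hac, hbd,
    hab.ne.symm, hda.ne.symm, hac.symm]

theorem containsCopy_starGraph [Fintype V] [DecidableRel G.Adj] {n : ℕ} (v : V)
    (h : n ≤ G.degree v) : G.ContainsCopy (_root_.starGraph n) := by
  obtain ⟨f⟩ : Nonempty (Fin n ↪ G.neighborSet v) :=
    Function.Embedding.nonempty_of_card_le (by rwa [Fintype.card_fin, card_neighborSet_eq_degree])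
  refine ⟨⟨Sum.elim (fun _ ↦ v) (fun i ↦ f i), ?_⟩, ?_⟩
  · exact Function.Injective.sumElim (fun _ _ _ ↦ Subsingleton.elim _ _)
      (Subtype.val_injective.comp f.injective) (fun _ i ↦ (G.ne_of_adj (f i).2))
  · rintro (_ | i) (_ | j) hij <;> simp [_root_.starGraph] at hij ⊢
    exacts [(f j).2, (f i).2.symm]

variable [Fintype V] [DecidableRel G.Adj]

theorem sum_degree_sub_one_le_of_cycleGraph_four_free (hG : ¬ G.ContainsCopy (cycleGraph 4))
    (v : V) : ∑ u ∈ G.neighborFinset v, (G.degree u - 1) ≤ Fintype.card V - 1 := by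
  classical
  have hdisj : (G.neighborFinset v : Set V).PairwiseDisjoint
      fun u ↦ (G.neighborFinset u).erase v := by
    intro u₁ hu₁ u₂ hu₂ hne
    refine Finset.disjoint_left.mpr fun w hw₁ hw₂ ↦ ?_
    simp only [mem_coe, mem_neighborFinset, mem_erase] at hu₁ hu₂ hw₁ hw₂
    exact hG (G.containsCopy_cycleGraph_four hu₁ hw₁.2 hw₂.2.symm hu₂.symm hw₁.1.symm hne)
  calc ∑ u ∈ G.neighborFinset v, (G.degree u - 1)
      = ∑ u ∈ G.neighborFinset v, #((G.neighborFinset u).erase v) := by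
        refine sum_congr rfl fun u hu ↦ ?_
        have hvu : v ∈ G.neighborFinset u := by simpa [adj_comm] using hu
        rw [card_erase_of_mem hvu, card_neighborFinset_eq_degree]
    _ = #((G.neighborFinset v).biUnion fun u ↦ (G.neighborFinset u).erase v) :=
        (card_biUnion hdisj).symm
    _ ≤ #(univ.erase v) := card_le_card fun w hw ↦ by
        obtain ⟨_, _, hw⟩ := mem_biUnion.mp hw
        exact mem_erase.mpr ⟨(mem_erase.mp hw).1, mem_univ w⟩
    _ = Fintype.card V - 1 := by rw [card_erase_of_mem (mem_univ v), card_univ]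

theorem degree_mul_le_of_cycleGraph_four_free (hG : ¬ G.ContainsCopy (cycleGraph 4)) {k : ℕ}
    (hmin : ∀ u, k + 1 ≤ G.degree u) (v : V) : G.degree v * k ≤ Fintype.card V - 1 :=
  calc G.degree v * k = #(G.neighborFinset v) • k := by
        rw [card_neighborFinset_eq_degree, smul_eq_mul]
    _ ≤ ∑ u ∈ G.neighborFinset v, (G.degree u - 1) :=
        card_nsmul_le_sum _ _ _ fun u _ ↦ Nat.le_sub_one_of_lt (hmin u)
    _ ≤ Fintype.card V - 1 := G.sum_degree_sub_one_le_of_cycleGraph_four_free hG v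

theorem exists_degree_le_of_cycleGraph_four_free (hG : ¬ G.ContainsCopy (cycleGraph 4)) {k : ℕ}
    (hk : Even k) (hodd : Odd (Fintype.card V)) (hcard : Fintype.card V ≤ k * (k + 2)) :
    ∃ v, G.degree v ≤ k := by
  classical
  by_contra! hmin
  have hdeg (v : V) : G.degree v = k + 1 := by
    have hlt : G.degree v * k < (k + 2) * k := by
      have := G.degree_mul_le_of_cycleGraph_four_free hG hmin v
      have := hodd.pos
      rw [mul_comm (k + 2)]
      omega
    have := Nat.lt_of_mul_lt_mul_right hlt
    have := hmin v
    omega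
  have hall : ({v | Odd (G.degree v)} : Finset V) = univ := by
    ext v
    simp [hdeg, hk]
  have := G.even_card_odd_degree_vertices
  rw [hall, card_univ] at this
  exact Nat.not_even_iff_odd.mpr hodd this

end SimpleGraph

open SimpleGraph in
theorem ramseyNumber_cycleGraph_four_starGraph_le {n k : ℕ} (hn : Even n) (hk : Even k)
    (h : n + k + 1 ≤ k * (k + 2)) :
    ramseyNumber (cycleGraph 4) (_root_.starGraph n) ≤ n + k + 1 := by
  refine Nat.sInf_le fun G ↦ or_iff_not_imp_left.mpr fun hG ↦ ?_
  classical
  have hodd : Odd (Fintype.card (Fin (n + k + 1))) := by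
    simpa [Fintype.card_fin] using (hn.add hk).add_one
  obtain ⟨v, hv⟩ := G.exists_degree_le_of_cycleGraph_four_free hG hk hodd (by simpa using h)
  exact Gᶜ.containsCopy_starGraph v (by rw [degree_compl, Fintype.card_fin]; omega)

/-- `R(C₄, K_{1,102}) ≤ 113`, `R(C₄, K_{1,104}) ≤ 115`, `R(C₄, K_{1,106}) ≤ 117`, and
`R(C₄, K_{1,108}) ≤ 119`. -/
theorem ramsey_C4_star_102_104_106_108_upper :
    ramseyNumber (SimpleGraph.cycleGraph 4) (starGraph 102) ≤ 113
      ∧ ramseyNumber (SimpleGraph.cycleGraph 4) (starGraph 104) ≤ 115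
      ∧ ramseyNumber (SimpleGraph.cycleGraph 4) (starGraph 106) ≤ 117
      ∧ ramseyNumber (SimpleGraph.cycleGraph 4) (starGraph 108) ≤ 119 := by
  refine ⟨?_, ?_, ?_, ?_⟩ <;>
    exact ramseyNumber_cycleGraph_four_starGraph_le (k := 10) (by decide) (by decide) (by norm_num)
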